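/- Let F be a field, let r, s ∈ F with s ≠ 0 and s ≠ 1, set c = s(r−1) and b = c·r, and let W be the Tate normal form E(b,c): y² + (1−c)xy − by = x³ − bx². If the discriminant Δ of W is nonzero, then for P = (0,0) one has 5•P = (rs(s−1), rs²(r−s)) and 6•P = ( s(r−1)(r−s)/(s−1)² , s²(r−1)²(rs − 2r + 1)/(s−1)³ ). -/

import Mathlib

/-!
Doubling gives `2P = (b, bc)`, and every further multiple is obtained by adding `P` along the
chord through `P`, whose slope at `(x, y)` is `y / x`. The hypothesis `Δ ≠ 0` forces
`b = s(r - 1)r ≠ 0`, which makes `P` nonsingular and, together with `s ≠ 1`, keeps the abscissae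
`b`, `c`, `r(r - 1)` and `rs(s - 1)` of `2P, …, 5P` nonzero, so no chord is vertical.
-/

namespace WeierstrassCurve.Affine

open Point

variable {F : Type*} [Field F]

lemma Point.exists_some_eq_some {W : Affine F} {x y x' y' : F} (h : W.Nonsingular x y)
    (hx : x = x') (hy : y = y') : ∃ h' : W.Nonsingular x' y', some _ _ h = some _ _ h' := by
  subst hx hy
  exact ⟨h, rfl⟩

def tateNormalForm (b c : F) : Affine F :=
  { a₁ := 1 - c, a₂ := -b, a₃ := -b, a₄ := 0, a₆ := 0 }

namespace tateNormalForm

lemma Δ_eq (b c : F) : (tateNormalForm b c).Δ =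
    b ^ 3 * (16 * b ^ 2 - 8 * b * c ^ 2 - 20 * b * c + b + c * (c - 1) ^ 3) := by
  simp only [tateNormalForm, WeierstrassCurve.Δ, WeierstrassCurve.b₂, WeierstrassCurve.b₄,
    WeierstrassCurve.b₆, WeierstrassCurve.b₈]
  ring

variable {b c : F}

lemma ne_zero_of_Δ_ne_zero (hΔ : (tateNormalForm b c).Δ ≠ 0) : b ≠ 0 := by
  rintro rfl
  simp [Δ_eq] at hΔ

lemma nonsingular_zero_zero (hb : b ≠ 0) : (tateNormalForm b c).Nonsingular 0 0 := by
  simp [tateNormalForm, hb]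

variable [DecidableEq F] {hP : (tateNormalForm b c).Nonsingular 0 0}

lemma two_zsmul_eq (hb : b ≠ 0) :
    ∃ h : (tateNormalForm b c).Nonsingular b (b * c), (2 : ℤ) • some _ _ hP = some _ _ h := by
  have hy : (0 : F) ≠ (tateNormalForm b c).negY 0 0 := by
    simpa [negY, tateNormalForm] using hb.symm
  have hslope : (tateNormalForm b c).slope 0 0 0 0 = 0 := by
    rw [slope_of_Y_ne rfl hy]
    simp [tateNormalForm]
  rw [two_zsmul, add_self_of_Y_ne hy]
  refine exists_some_eq_some _ ?_ ?_ <;>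
    rw [hslope] <;> simp only [addY, negAddY, addX, negY, tateNormalForm] <;> ring

lemma exists_add_one_zsmul_eq {n : ℤ} {x y x' y' : F} {h : (tateNormalForm b c).Nonsingular x y}
    (hn : n • some _ _ hP = some _ _ h) (hx : x ≠ 0)
    (hx' : x' = (y / x) ^ 2 + (1 - c) * (y / x) + b - x)
    (hy' : y' = b - y - (1 - c) * x' - y / x * (x' - x)) :
    ∃ h' : (tateNormalForm b c).Nonsingular x' y', (n + 1) • some _ _ hP = some _ _ h' := by
  rw [add_one_zsmul, hn, add_of_X_ne hx]
  have hslope : (tateNormalForm b c).slope x 0 y 0 = y / x := by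
    rw [slope_of_X_ne hx, sub_zero, sub_zero]
  have hX : (tateNormalForm b c).addX x 0 (y / x) = x' := by
    rw [hx', addX]
    simp only [tateNormalForm]
    ring
  refine exists_some_eq_some _ (by rw [hslope, hX]) ?_
  rw [hslope, addY, negAddY, negY, hX, hy']
  simp only [tateNormalForm]
  ring

lemma three_zsmul_eq (hb : b ≠ 0) :
    ∃ h : (tateNormalForm b c).Nonsingular c (b - c), (3 : ℤ) • some _ _ hP = some _ _ h := by
  obtain ⟨h₂, e₂⟩ := two_zsmul_eq (hP := hP) hb
  exact exists_add_one_zsmul_eq e₂ hb (by field_simp; ring) (by field_simp; ring)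

end tateNormalForm

end WeierstrassCurve.Affine

open Classical in
theorem tate_normal_form_five_six_smul (F : Type*) [Field F] (r s : F)
    (hs1 : s ≠ 1)
    (c : F) (hc : c = s * (r - 1)) (b : F) (hb : b = c * r)
    (W : WeierstrassCurve.Affine F)
    (hW : W = { a₁ := 1 - c, a₂ := -b, a₃ := -b, a₄ := 0, a₆ := 0 })
    (hΔ : W.Δ ≠ 0) :
    ∃ (h : W.Nonsingular 0 0)
      (h5 : W.Nonsingular (r * s * (s - 1)) (r * s ^ 2 * (r - s)))
      (h6 : W.Nonsingular (s * (r - 1) * (r - s) / (s - 1) ^ 2)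
        (s ^ 2 * (r - 1) ^ 2 * (r * s - 2 * r + 1) / (s - 1) ^ 3)),
      (5 : ℤ) • (WeierstrassCurve.Affine.Point.some _ _ h) =
        WeierstrassCurve.Affine.Point.some _ _ h5 ∧
      (6 : ℤ) • (WeierstrassCurve.Affine.Point.some _ _ h) =
        WeierstrassCurve.Affine.Point.some _ _ h6 := by
  open WeierstrassCurve.Affine tateNormalForm in
  obtain rfl : W = tateNormalForm b c := hW
  have hb0 := ne_zero_of_Δ_ne_zero hΔ
  have hP : (tateNormalForm b c).Nonsingular 0 0 := nonsingular_zero_zero hb0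
  subst hc hb
  obtain ⟨hc0, hr0⟩ := mul_ne_zero_iff.mp hb0
  obtain ⟨hs0, hr1⟩ := mul_ne_zero_iff.mp hc0
  have hs1' : s - 1 ≠ 0 := sub_ne_zero.mpr hs1
  obtain ⟨h₃, e₃⟩ := three_zsmul_eq (hP := hP) hb0
  obtain ⟨h₄, e₄⟩ := exists_add_one_zsmul_eq (x' := r * (r - 1)) (y' := r ^ 2 * (r - 1) * (s - 1))
    e₃ hc0 (by field_simp; ring) (by field_simp; ring)
  obtain ⟨h₅, e₅⟩ := exists_add_one_zsmul_eq (x' := r * s * (s - 1)) (y' := r * s ^ 2 * (r - s))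
    e₄ (mul_ne_zero hr0 hr1) (by field_simp; ring) (by field_simp; ring)
  obtain ⟨h₆, e₆⟩ := exists_add_one_zsmul_eq (x' := s * (r - 1) * (r - s) / (s - 1) ^ 2)
    (y' := s ^ 2 * (r - 1) ^ 2 * (r * s - 2 * r + 1) / (s - 1) ^ 3)
    e₅ (mul_ne_zero (mul_ne_zero hr0 hs0) hs1') (by field_simp; ring) (by field_simp; ring)
  exact ⟨hP, h₅, h₆, e₅, e₆⟩
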